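/- arXiv:2312.17518 — 7 statements merged into one kernel-verified Lean document; each statement's English description precedes it below -/
import Mathlib

section
/- Let (C₁, C₂) be a CSS-T pair of binary codes of length n with C₂ ≠ {0}. Then (C₁, C₂) is a minimal element of the poset 𝒫 of CSS-T pairs (i.e., every CSS-T pair (C₁′, C₂′) with C₂′ ≠ {0}, C₁′ ⊆ C₁ and C₂′ ⊆ C₂ satisfies C₁′ = C₁ and C₂′ = C₂) if and only if there exists a nonzero vector u ∈ 𝔽₂ⁿ of even Hamming weight such that C₁ = C₂ = span{u}. -/
open Finset

/-- The Euclidean dual of a binary code. -/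
def dualCode {n : ℕ} (C : Submodule (ZMod 2) (Fin n → ZMod 2)) :
    Submodule (ZMod 2) (Fin n → ZMod 2) where
  carrier := {x | ∀ c ∈ C, ∑ i, x i * c i = 0}
  add_mem' := by
    intro a b ha hb
    intro c hc
    have : ∑ i, (a + b) i * c i = ∑ i, (a i * c i + b i * c i) := by
      apply Finset.sum_congr rfl
      intro i _
      simp [add_mul]
    rw [this, Finset.sum_add_distrib, ha c hc, hb c hc, add_zero]
  zero_mem' := by
    intro c hc
    simp
  smul_mem' := by
    intro r a ha
    intro c hc
    have : ∑ i, (r • a) i * c i = r * ∑ i, a i * c i := by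
      rw [Finset.mul_sum]
      apply Finset.sum_congr rfl
      intro i _
      simp [mul_assoc]
    rw [this, ha c hc, mul_zero]

/-- The (componentwise) Schur product of two binary codes. -/
def schur {n : ℕ} (C D : Submodule (ZMod 2) (Fin n → ZMod 2)) :
    Submodule (ZMod 2) (Fin n → ZMod 2) :=
  Submodule.span (ZMod 2) {x | ∃ c ∈ C, ∃ d ∈ D, x = c * d}

/-- A pair of binary codes `(C₁, C₂)` is a CSS-T pair if `C₂ ⊆ C₁ ∩ (C₁^{⋆2})^⊥`. -/
def IsCSST {n : ℕ} (C₁ C₂ : Submodule (ZMod 2) (Fin n → ZMod 2)) : Prop :=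
  C₂ ≤ C₁ ⊓ dualCode (schur C₁ C₁)

lemma zmod2_sq (x : ZMod 2) : x * x = x := by revert x; decide

lemma zmod2_eq_one {x : ZMod 2} (hx : x ≠ 0) : x = 1 := by revert hx; revert x; decide

lemma sum_eq_norm {n : ℕ} (u : Fin n → ZMod 2) :
    ∑ i, u i = (hammingNorm u : ZMod 2) := by
  rw [hammingNorm, ← Finset.sum_boole]
  apply Finset.sum_congr rfl
  intro i _
  by_cases h : u i = 0
  · simp [h]
  · simp [h, zmod2_eq_one h]

lemma mul_self_fun {n : ℕ} (u : Fin n → ZMod 2) : u * u = u := by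
  funext i; exact zmod2_sq (u i)

theorem stmt_6 (n : ℕ) (C₁ C₂ : Submodule (ZMod 2) (Fin n → ZMod 2))
    (h : IsCSST C₁ C₂) (h₂ : C₂ ≠ ⊥) :
    (∀ C₁' C₂' : Submodule (ZMod 2) (Fin n → ZMod 2),
        IsCSST C₁' C₂' → C₂' ≠ ⊥ → C₁' ≤ C₁ → C₂' ≤ C₂ → C₁' = C₁ ∧ C₂' = C₂)
    ↔ ∃ u : Fin n → ZMod 2, u ≠ 0 ∧ Even (hammingNorm u) ∧
        C₁ = Submodule.span (ZMod 2) {u} ∧ C₂ = Submodule.span (ZMod 2) {u} := by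
  constructor
  · intro hmin
    obtain ⟨u, huC2, hu0⟩ := (Submodule.ne_bot_iff C₂).mp h₂
    have huC1 : u ∈ C₁ := (h huC2).1
    have hdual : ∀ c ∈ schur C₁ C₁, ∑ i, u i * c i = 0 := (h huC2).2
    have husq : u ∈ schur C₁ C₁ :=
      Submodule.subset_span ⟨u, huC1, u, huC1, (mul_self_fun u).symm⟩
    have hsum : ∑ i, u i * u i = 0 := hdual u husq
    have hsum' : ((hammingNorm u : ZMod 2)) = 0 := by
      rw [← sum_eq_norm, ← hsum]
      exact Finset.sum_congr rfl fun i _ => (zmod2_sq (u i)).symm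
    have heven : Even (hammingNorm u) := by
      rw [even_iff_two_dvd]
      exact (ZMod.natCast_eq_zero_iff _ 2).mp hsum'
    -- schur (span u) (span u) ≤ span u
    have hschur : schur (Submodule.span (ZMod 2) {u}) (Submodule.span (ZMod 2) {u})
        ≤ Submodule.span (ZMod 2) {u} := by
      rw [schur, Submodule.span_le]
      rintro x ⟨c, hc, d, hd, rfl⟩
      obtain ⟨a, rfl⟩ := Submodule.mem_span_singleton.mp hc
      obtain ⟨b, rfl⟩ := Submodule.mem_span_singleton.mp hd
      refine Submodule.mem_span_singleton.mpr ⟨a * b, ?_⟩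
      funext i
      simp [mul_comm, mul_assoc, mul_left_comm, zmod2_sq (u i)]
    have hcsst : IsCSST (Submodule.span (ZMod 2) {u}) (Submodule.span (ZMod 2) {u}) := by
      refine le_inf le_rfl ?_
      intro x hx
      obtain ⟨a, rfl⟩ := Submodule.mem_span_singleton.mp hx
      intro c hc
      obtain ⟨b, rfl⟩ := Submodule.mem_span_singleton.mp (hschur hc)
      have : ∑ i, (a • u) i * (b • u) i = (a * b) * ∑ i, u i * u i := by
        rw [Finset.mul_sum]
        apply Finset.sum_congr rfl
        intro i _
        simp [Pi.smul_apply, smul_eq_mul]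
        ring
      rw [this, hsum, mul_zero]
    have hle1 : Submodule.span (ZMod 2) {u} ≤ C₁ :=
      (Submodule.span_singleton_le_iff_mem u C₁).mpr huC1
    have hle2 : Submodule.span (ZMod 2) {u} ≤ C₂ :=
      (Submodule.span_singleton_le_iff_mem u C₂).mpr huC2
    have hne : Submodule.span (ZMod 2) {u} ≠ (⊥ : Submodule (ZMod 2) (Fin n → ZMod 2)) := by
      rw [Ne, Submodule.span_singleton_eq_bot]; exact hu0
    obtain ⟨e1, e2⟩ := hmin _ _ hcsst hne hle1 hle2
    exact ⟨u, hu0, heven, e1.symm, e2.symm⟩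
  · rintro ⟨u, hu0, heven, hC1, hC2⟩ C₁' C₂' h' hne' hle1 hle2
    obtain ⟨x, hxC2', hx0⟩ := (Submodule.ne_bot_iff C₂').mp hne'
    have hxspan : x ∈ Submodule.span (ZMod 2) {u} := hC2 ▸ hle2 hxC2'
    obtain ⟨a, rfl⟩ := Submodule.mem_span_singleton.mp hxspan
    have ha : a ≠ 0 := by rintro rfl; simp at hx0
    have huC2' : u ∈ C₂' := by
      rw [zmod2_eq_one ha, one_smul] at hxC2'
      exact hxC2'
    have huC1' : u ∈ C₁' := (h' huC2').1
    constructor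
    · refine le_antisymm hle1 ?_
      rw [hC1]
      exact (Submodule.span_singleton_le_iff_mem u C₁').mpr huC1'
    · refine le_antisymm hle2 ?_
      rw [hC2]
      exact (Submodule.span_singleton_le_iff_mem u C₂').mpr huC2'
end

section
/- Let (C₁, C₂) be a CSS-T pair of binary codes of length n and let y ∈ 𝔽₂ⁿ. Then (C₁ + span{y}, C₂) is a CSS-T pair if and only if y ∈ C₂^⊥ ∩ (C₁⋆C₂)^⊥ (equivalently, C₁⋆span{y} + span{y} ⊆ C₂^⊥). -/
open Finset

def dot {n : ℕ} (x c : Fin n → ZMod 2) : ZMod 2 := ∑ i, x i * c i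

lemma dot_add_right {n : ℕ} (x a b : Fin n → ZMod 2) :
    dot x (a + b) = dot x a + dot x b := by
  simp [dot, mul_add, Finset.sum_add_distrib]

lemma dot_smul_right {n : ℕ} (x : Fin n → ZMod 2) (r : ZMod 2) (a : Fin n → ZMod 2) :
    dot x (r • a) = r * dot x a := by
  simp only [dot, Finset.mul_sum, Pi.smul_apply, smul_eq_mul]
  exact Finset.sum_congr rfl fun i _ => by ring

lemma mem_dual_span {n : ℕ} {S : Set (Fin n → ZMod 2)} (x : Fin n → ZMod 2)
    (hx : ∀ s ∈ S, dot x s = 0) : x ∈ dualCode (Submodule.span (ZMod 2) S) := by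
  have key : ∀ c ∈ Submodule.span (ZMod 2) S, dot x c = 0 := by
    intro c hc
    refine Submodule.span_induction (p := fun c _ => dot x c = 0) hx ?_ ?_ ?_ hc
    · simp [dot]
    · intro a b _ _ ha hb; rw [dot_add_right, ha, hb, add_zero]
    · intro r a _ ha; rw [dot_smul_right, ha, mul_zero]
  exact key

lemma zmod2_key : ∀ c c₁ d₁ y r t : ZMod 2,
    c * ((c₁ + r * y) * (d₁ + t * y)) =
      c * (c₁ * d₁) + t * (c * (c₁ * y)) + (r * (c * (d₁ * y)) + (r * t) * (c * y)) := by
  decide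

theorem stmt_8 (n : ℕ) (C₁ C₂ : Submodule (ZMod 2) (Fin n → ZMod 2))
    (h : IsCSST C₁ C₂) (y : Fin n → ZMod 2) :
    IsCSST (C₁ ⊔ Submodule.span (ZMod 2) {y}) C₂
    ↔ y ∈ dualCode C₂ ⊓ dualCode (schur C₁ C₂) := by
  have hyC₁' : y ∈ C₁ ⊔ Submodule.span (ZMod 2) {y} :=
    Submodule.mem_sup_right (Submodule.mem_span_singleton_self y)
  have hyy : y * y = y := funext fun i => by
    have : ∀ a : ZMod 2, a * a = a := by decide
    exact this _
  constructor
  · intro h'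
    constructor
    · -- y ∈ dualCode C₂
      intro c hc
      have h2 := (h' hc).2
      have hmem : y ∈ schur (C₁ ⊔ Submodule.span (ZMod 2) {y}) (C₁ ⊔ Submodule.span (ZMod 2) {y}) :=
        Submodule.subset_span ⟨y, hyC₁', y, hyC₁', hyy.symm⟩
      have h0 := h2 y hmem
      calc (∑ i, y i * c i) = ∑ i, c i * y i := Finset.sum_congr rfl fun i _ => mul_comm _ _
        _ = 0 := h0
    · -- y ∈ dualCode (schur C₁ C₂)
      apply mem_dual_span
      rintro s ⟨c₁, hc₁, c₂, hc₂, rfl⟩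
      have h2 := (h' hc₂).2
      have hmem : c₁ * y ∈ schur (C₁ ⊔ Submodule.span (ZMod 2) {y}) (C₁ ⊔ Submodule.span (ZMod 2) {y}) :=
        Submodule.subset_span ⟨c₁, Submodule.mem_sup_left hc₁, y, hyC₁', rfl⟩
      have h0 := h2 (c₁ * y) hmem
      calc dot y (c₁ * c₂) = ∑ i, c₂ i * (c₁ * y) i :=
            Finset.sum_congr rfl fun i _ => by simp only [Pi.mul_apply]; ring
        _ = 0 := h0
  · rintro ⟨hy1, hy2⟩
    refine le_inf (le_trans (le_trans h inf_le_left) le_sup_left) ?_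
    intro c hc
    apply mem_dual_span
    rintro s ⟨a, ha, b, hb, rfl⟩
    obtain ⟨c₁, hc₁, u, hu, rfl⟩ := Submodule.mem_sup.mp ha
    obtain ⟨r, rfl⟩ := Submodule.mem_span_singleton.mp hu
    obtain ⟨d₁, hd₁, v, hv, rfl⟩ := Submodule.mem_sup.mp hb
    obtain ⟨t, rfl⟩ := Submodule.mem_span_singleton.mp hv
    have hA : (∑ i, c i * (c₁ i * d₁ i)) = 0 := by
      have h0 := (h hc).2 (c₁ * d₁) (Submodule.subset_span ⟨c₁, hc₁, d₁, hd₁, rfl⟩)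
      simpa using h0
    have hB : (∑ i, c i * (c₁ i * y i)) = 0 := by
      have h0 := hy2 (c₁ * c) (Submodule.subset_span ⟨c₁, hc₁, c, hc, rfl⟩)
      calc (∑ i, c i * (c₁ i * y i)) = ∑ i, y i * (c₁ * c) i :=
            Finset.sum_congr rfl fun i _ => by simp only [Pi.mul_apply]; ring
        _ = 0 := h0
    have hC : (∑ i, c i * (d₁ i * y i)) = 0 := by
      have h0 := hy2 (d₁ * c) (Submodule.subset_span ⟨d₁, hd₁, c, hc, rfl⟩)
      calc (∑ i, c i * (d₁ i * y i)) = ∑ i, y i * (d₁ * c) i :=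
            Finset.sum_congr rfl fun i _ => by simp only [Pi.mul_apply]; ring
        _ = 0 := h0
    have hD : (∑ i, c i * y i) = 0 := by
      have h0 := hy1 c hc
      calc (∑ i, c i * y i) = ∑ i, y i * c i := Finset.sum_congr rfl fun i _ => mul_comm _ _
        _ = 0 := h0
    calc dot c ((c₁ + r • y) * (d₁ + t • y))
        = ∑ i, (c i * (c₁ i * d₁ i) + t * (c i * (c₁ i * y i))
            + (r * (c i * (d₁ i * y i)) + (r * t) * (c i * y i))) :=
          Finset.sum_congr rfl fun i _ => zmod2_key (c i) (c₁ i) (d₁ i) (y i) r t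
      _ = (∑ i, c i * (c₁ i * d₁ i)) + t * (∑ i, c i * (c₁ i * y i))
            + (r * (∑ i, c i * (d₁ i * y i)) + (r * t) * (∑ i, c i * y i)) := by
          simp only [Finset.sum_add_distrib, Finset.mul_sum]
      _ = 0 := by rw [hA, hB, hC, hD]; ring
end

section
/- Let (C₁, C₂) be a CSS-T pair of binary codes of length n. Then (C₁ + span{𝟙}, C₂) is also a CSS-T pair, where 𝟙 = (1, 1, …, 1) ∈ 𝔽₂ⁿ is the all-ones vector. -/
open Finset

theorem stmt_9 (n : ℕ) (C₁ C₂ : Submodule (ZMod 2) (Fin n → ZMod 2))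
    (h : IsCSST C₁ C₂) :
    IsCSST (C₁ ⊔ Submodule.span (ZMod 2) {(1 : Fin n → ZMod 2)}) C₂ := by
  intro x hx
  obtain ⟨hx1, hx2⟩ := h hx
  have hsq : ∀ a : ZMod 2, a * a = a := by decide
  have hdual : ∀ c ∈ C₁, ∀ d ∈ C₁, ∑ i, x i * (c i * d i) = 0 := by
    intro c hc d hd
    have := hx2 (c * d) (Submodule.subset_span ⟨c, hc, d, hd, rfl⟩)
    simpa using this
  have hself : ∀ c ∈ C₁, ∑ i, x i * c i = 0 := by
    intro c hc
    have := hdual c hc c hc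
    simpa [hsq] using this
  have hone : ∑ i, x i = 0 := by
    have := hself x hx1
    have h2 : ∑ i, x i * x i = ∑ i, x i := by
      apply Finset.sum_congr rfl; intro i _; exact hsq _
    rw [h2] at this; exact this
  refine ⟨Submodule.mem_sup_left hx1, ?_⟩
  intro s hs
  let φ : (Fin n → ZMod 2) →ₗ[ZMod 2] ZMod 2 :=
    { toFun := fun v => ∑ i, x i * v i
      map_add' := by
        intro a b
        simp [mul_add, Finset.sum_add_distrib]
      map_smul' := by
        intro r a
        simp [Finset.mul_sum]; apply Finset.sum_congr rfl; intro i _; ring }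
  have hker : schur (C₁ ⊔ Submodule.span (ZMod 2) {(1 : Fin n → ZMod 2)})
      (C₁ ⊔ Submodule.span (ZMod 2) {(1 : Fin n → ZMod 2)}) ≤ LinearMap.ker φ := by
    rw [schur, Submodule.span_le]
    rintro _ ⟨c, hc, d, hd, rfl⟩
    rw [Submodule.mem_sup] at hc hd
    obtain ⟨y, hy, z, hz, rfl⟩ := hc
    obtain ⟨y', hy', z', hz', rfl⟩ := hd
    rw [Submodule.mem_span_singleton] at hz hz'
    obtain ⟨r, rfl⟩ := hz
    obtain ⟨t, rfl⟩ := hz'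
    have key : ∀ i, x i * (((y + r • (1 : Fin n → ZMod 2)) * (y' + t • 1)) i)
        = x i * (y i * y' i) + t * (x i * y i) + r * (x i * y' i) + r * t * x i := by
      intro i
      simp only [Pi.mul_apply, Pi.add_apply, Pi.smul_apply, Pi.one_apply, smul_eq_mul,
        mul_one]
      ring
    simp only [SetLike.mem_coe, LinearMap.mem_ker]
    show ∑ i, x i * (((y + r • (1 : Fin n → ZMod 2)) * (y' + t • 1)) i) = 0
    calc ∑ i, x i * (((y + r • (1 : Fin n → ZMod 2)) * (y' + t • 1)) i)
        = ∑ i, (x i * (y i * y' i) + t * (x i * y i) + r * (x i * y' i) + r * t * x i) :=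
          Finset.sum_congr rfl (fun i _ => key i)
      _ = (∑ i, x i * (y i * y' i)) + t * (∑ i, x i * y i) + r * (∑ i, x i * y' i)
            + r * t * (∑ i, x i) := by
          simp [Finset.sum_add_distrib, Finset.mul_sum]
      _ = 0 := by
          rw [hdual y hy y' hy', hself y hy, hself y' hy', hone]; ring
  have := hker hs
  simpa [φ] using this
end

section
/- Let C₂ ⊆ C₁ ⊆ 𝔽₂ⁿ be binary codes with C₂ ≠ {0}. Then (C₁, C₂) is a maximal element of the poset 𝒫 of CSS-T pairs (i.e., (C₁, C₂) is a CSS-T pair and every CSS-T pair (D₁, D₂) with D₂ ≠ {0}, C₁ ⊆ D₁ and C₂ ⊆ D₂ satisfies D₁ = C₁ and D₂ = C₂) if and only if C₁^⊥ = C₁⋆C₂ and C₂^⊥ = C₁^{⋆2}. -/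
open Finset

/-!
The trilinear form `(a, b, c) ↦ ∑ aᵢ bᵢ cᵢ` is symmetric, so `E ⊆ (C ⋆ D)^⊥` is invariant under
permuting `C, D, E`. For a CSS-T pair this gives `C₁ ⋆ C₂ ⊆ C₁^⊥` and `C₁^{⋆2} ⊆ C₂^⊥`.

If the pair is maximal, both inclusions are equalities. A vector `x ⊥ C₁ ⋆ C₂` can be adjoined to
`C₁` without losing the CSS-T property, because over `𝔽₂` we have `x ⋆ x = x` and
`C₂ ⊆ C₁ ⋆ C₂` (`c = c ⋆ c`); and `(C₁, (C₁^{⋆2})^⊥)` is a CSS-T pair above `(C₁, C₂)`.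
Conversely, if both equalities hold and `(D₁, D₂)` is a larger CSS-T pair, then
`D₁^⊥ ⊇ D₁ ⋆ D₂ ⊇ C₁ ⋆ C₂ = C₁^⊥` and `D₂^⊥ ⊇ D₁^{⋆2} ⊇ C₁^{⋆2} = C₂^⊥`, so `D = C`.
-/

section

variable {n : ℕ} {C D E : Submodule (ZMod 2) (Fin n → ZMod 2)}

open Submodule

lemma dualCode_eq_orthogonal (C : Submodule (ZMod 2) (Fin n → ZMod 2)) :
    dualCode C = (Matrix.toBilin' (1 : Matrix (Fin n) (Fin n) (ZMod 2))).orthogonal C := by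
  ext x
  simp only [LinearMap.BilinForm.mem_orthogonal_iff, Matrix.toBilin'_apply',
    Matrix.one_mulVec, dotProduct_comm]
  rfl

@[simp]
lemma dualCode_dualCode (C : Submodule (ZMod 2) (Fin n → ZMod 2)) :
    dualCode (dualCode C) = C := by
  rw [dualCode_eq_orthogonal, dualCode_eq_orthogonal]
  exact LinearMap.BilinForm.orthogonal_orthogonal
    (Matrix.nondegenerate_of_det_ne_zero (by simp)).toBilin'
    (Matrix.isSymm_toBilin'_iff_isSymm.mpr Matrix.isSymm_one).isRefl C

lemma dualCode_eq_comm : dualCode C = D ↔ dualCode D = C :=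
  ⟨fun h => h ▸ dualCode_dualCode C, fun h => h ▸ dualCode_dualCode D⟩

lemma dualCode_antitone : Antitone (dualCode (n := n)) :=
  fun _ _ h _ hx c hc => hx c (h hc)

lemma dualCode_le_dualCode_iff : dualCode C ≤ dualCode D ↔ D ≤ C :=
  ⟨fun h => by simpa using dualCode_antitone h, fun h => dualCode_antitone h⟩

lemma le_dualCode_comm : C ≤ dualCode D ↔ D ≤ dualCode C := by
  constructor <;> intro h x hx c hc <;>
    simpa only [mul_comm] using h hc x hx

lemma dualCode_sup : dualCode (C ⊔ D) = dualCode C ⊓ dualCode D := by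
  refine le_antisymm (le_inf (dualCode_antitone le_sup_left) (dualCode_antitone le_sup_right)) ?_
  rw [le_dualCode_comm, sup_le_iff]
  exact ⟨le_dualCode_comm.mp inf_le_left, le_dualCode_comm.mp inf_le_right⟩

lemma mul_mem_schur {c d : Fin n → ZMod 2} (hc : c ∈ C) (hd : d ∈ D) : c * d ∈ schur C D :=
  subset_span ⟨c, hc, d, hd, rfl⟩

lemma schur_mono {C' D' : Submodule (ZMod 2) (Fin n → ZMod 2)} (hC : C ≤ C') (hD : D ≤ D') :
    schur C D ≤ schur C' D' :=
  span_le.mpr <| by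
    rintro _ ⟨c, hc, d, hd, rfl⟩
    exact mul_mem_schur (hC hc) (hD hd)

lemma schur_comm (C D : Submodule (ZMod 2) (Fin n → ZMod 2)) : schur C D = schur D C := by
  suffices ∀ C D : Submodule (ZMod 2) (Fin n → ZMod 2), schur C D ≤ schur D C from
    le_antisymm (this C D) (this D C)
  intro C D
  exact span_le.mpr fun _ ⟨c, hc, d, hd, h⟩ => h ▸ mul_comm d c ▸ mul_mem_schur hd hc

lemma schur_sup_left (C C' D : Submodule (ZMod 2) (Fin n → ZMod 2)) :
    schur (C ⊔ C') D = schur C D ⊔ schur C' D := by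
  refine le_antisymm (span_le.mpr ?_)
    (sup_le (schur_mono le_sup_left le_rfl) (schur_mono le_sup_right le_rfl))
  rintro _ ⟨_, hcc', d, hd, rfl⟩
  obtain ⟨c, hc, c', hc', rfl⟩ := mem_sup.mp hcc'
  rw [add_mul]
  exact add_mem_sup (mul_mem_schur hc hd) (mul_mem_schur hc' hd)

lemma schur_sup_right (C D D' : Submodule (ZMod 2) (Fin n → ZMod 2)) :
    schur C (D ⊔ D') = schur C D ⊔ schur C D' := by
  rw [schur_comm, schur_sup_left, schur_comm D, schur_comm D']

lemma le_dualCode_schur_iff :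
    E ≤ dualCode (schur C D) ↔ ∀ e ∈ E, ∀ c ∈ C, ∀ d ∈ D, ∑ i, e i * c i * d i = 0 := by
  rw [le_dualCode_comm, schur, span_le]
  constructor
  · intro h e he c hc d hd
    simpa [mul_comm, mul_left_comm] using h ⟨c, hc, d, hd, rfl⟩ e he
  · rintro h _ ⟨c, hc, d, hd, rfl⟩ e he
    simpa [mul_comm, mul_left_comm] using h e he c hc d hd

lemma le_dualCode_schur_rotate : E ≤ dualCode (schur C D) ↔ C ≤ dualCode (schur D E) := by
  simp only [le_dualCode_schur_iff]
  constructor <;> intro h x hx y hy z hz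
  · rw [← h z hz x hx y hy]; simp only [mul_comm, mul_left_comm]
  · rw [← h y hy z hz x hx]; simp only [mul_comm, mul_left_comm]

lemma zmod_two_pi_mul_self (x : Fin n → ZMod 2) : x * x = x :=
  funext fun i => by simpa [sq] using ZMod.pow_card (p := 2) (x i)

lemma le_schur_of_le (h : D ≤ C) : D ≤ schur C D := fun d hd =>
  zmod_two_pi_mul_self d ▸ mul_mem_schur (h hd) hd

lemma schur_span_singleton_self_le (x : Fin n → ZMod 2) :
    schur (span (ZMod 2) {x}) (span (ZMod 2) {x}) ≤ span (ZMod 2) {x} := by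
  refine span_le.mpr ?_
  rintro _ ⟨_, hc, _, hd, rfl⟩
  obtain ⟨a, rfl⟩ := mem_span_singleton.mp hc
  obtain ⟨b, rfl⟩ := mem_span_singleton.mp hd
  rw [smul_mul_smul_comm, zmod_two_pi_mul_self]
  exact smul_mem _ _ (mem_span_singleton_self x)

variable {C₁ C₂ D₁ D₂ : Submodule (ZMod 2) (Fin n → ZMod 2)}

lemma IsCSST.sup_span_singleton (h : IsCSST C₁ C₂) {x : Fin n → ZMod 2}
    (hx : x ∈ dualCode (schur C₁ C₂)) : IsCSST (C₁ ⊔ span (ZMod 2) {x}) C₂ := by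
  obtain ⟨hsub, horth⟩ := le_inf_iff.mp h
  set S := span (ZMod 2) {x}
  have hmixed : C₂ ≤ dualCode (schur S C₁) :=
    le_dualCode_schur_rotate.mpr ((span_singleton_le_iff_mem x _).mpr hx)
  have hsquare : C₂ ≤ dualCode (schur S S) := by
    refine le_trans ?_ (dualCode_antitone (schur_span_singleton_self_le x))
    rw [le_dualCode_comm, span_singleton_le_iff_mem]
    exact dualCode_antitone (le_schur_of_le hsub) hx
  refine le_inf (hsub.trans le_sup_left) ?_
  rw [schur_sup_left, schur_sup_right, schur_sup_right, schur_comm C₁ S, dualCode_sup,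
    dualCode_sup, dualCode_sup]
  exact le_inf (le_inf horth hmixed) (le_inf hmixed hsquare)

lemma IsCSST.dualCode_eq_of_maximal (h : IsCSST C₁ C₂) (h₂ : C₂ ≠ ⊥)
    (hmax : ∀ D₁ D₂ : Submodule (ZMod 2) (Fin n → ZMod 2),
      IsCSST D₁ D₂ → D₂ ≠ ⊥ → C₁ ≤ D₁ → C₂ ≤ D₂ → D₁ = C₁ ∧ D₂ = C₂) :
    dualCode C₁ = schur C₁ C₂ ∧ dualCode C₂ = schur C₁ C₁ := by
  obtain ⟨hsub, horth⟩ := le_inf_iff.mp h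
  have hC₁ : dualCode (schur C₁ C₂) = C₁ := by
    refine le_antisymm (fun x hx => ?_) (le_dualCode_schur_rotate.mp horth)
    rw [← (hmax _ C₂ (h.sup_span_singleton hx) h₂ le_sup_left le_rfl).1]
    exact mem_sup_right (mem_span_singleton_self x)
  have hF : IsCSST C₁ (dualCode (schur C₁ C₁)) :=
    le_inf ((dualCode_antitone (schur_mono le_rfl hsub)).trans hC₁.le) le_rfl
  have hC₂ := (hmax C₁ _ hF (ne_bot_of_le_ne_bot h₂ horth) le_rfl horth).2
  exact ⟨dualCode_eq_comm.mp hC₁, dualCode_eq_comm.mp hC₂⟩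

lemma IsCSST.schur_le_dualCode_left (h : IsCSST D₁ D₂) : schur D₁ D₂ ≤ dualCode D₁ :=
  le_dualCode_comm.mp (le_dualCode_schur_rotate.mp (h.trans inf_le_right))

lemma IsCSST.schur_le_dualCode_right (h : IsCSST D₁ D₂) : schur D₁ D₁ ≤ dualCode D₂ :=
  le_dualCode_comm.mp (h.trans inf_le_right)

lemma isCSST_of_dualCode_eq (hsub : C₂ ≤ C₁) (h₂ : dualCode C₂ = schur C₁ C₁) :
    IsCSST C₁ C₂ :=
  le_inf hsub (dualCode_eq_comm.mp h₂).ge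

lemma IsCSST.eq_of_le (hD : IsCSST D₁ D₂) (h₁ : dualCode C₁ = schur C₁ C₂)
    (h₂ : dualCode C₂ = schur C₁ C₁) (hC₁ : C₁ ≤ D₁) (hC₂ : C₂ ≤ D₂) : D₁ = C₁ ∧ D₂ = C₂ := by
  refine ⟨le_antisymm (dualCode_le_dualCode_iff.mp ?_) hC₁,
    le_antisymm (dualCode_le_dualCode_iff.mp ?_) hC₂⟩
  · exact h₁ ▸ (schur_mono hC₁ hC₂).trans hD.schur_le_dualCode_left
  · exact h₂ ▸ (schur_mono hC₁ hC₁).trans hD.schur_le_dualCode_right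

end

theorem stmt_11 (n : ℕ) (C₁ C₂ : Submodule (ZMod 2) (Fin n → ZMod 2))
    (hsub : C₂ ≤ C₁) (h₂ : C₂ ≠ ⊥) :
    (IsCSST C₁ C₂ ∧
      ∀ D₁ D₂ : Submodule (ZMod 2) (Fin n → ZMod 2),
        IsCSST D₁ D₂ → D₂ ≠ ⊥ → C₁ ≤ D₁ → C₂ ≤ D₂ → D₁ = C₁ ∧ D₂ = C₂)
    ↔ (dualCode C₁ = schur C₁ C₂ ∧ dualCode C₂ = schur C₁ C₁) := by
  constructor
  · rintro ⟨h, hmax⟩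
    exact h.dualCode_eq_of_maximal h₂ hmax
  · rintro ⟨hdual₁, hdual₂⟩
    exact ⟨isCSST_of_dualCode_eq hsub hdual₂,
      fun _ _ hD _ hC₁ hC₂ => hD.eq_of_le hdual₁ hdual₂ hC₁ hC₂⟩
end

section
/- Let (C₁, C₂) be a CSS-T pair of binary codes of length n with C₂ ≠ {0}, and suppose there exists no CSS-T pair (D₁, D₂) with D₂ ≠ {0} and C₁ ⊊ D₁. Then C₂ = span{y} for some y ∈ C₁, and (C₁, C₂) is a maximal element of the poset 𝒫 of CSS-T pairs (i.e., every CSS-T pair (D₁, D₂) with D₂ ≠ {0}, C₁ ⊆ D₁ and C₂ ⊆ D₂ satisfies D₁ = C₁ and D₂ = C₂). -/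
open Finset

lemma mem_dualCode' {n : ℕ} {C : Submodule (ZMod 2) (Fin n → ZMod 2)} {x : Fin n → ZMod 2} :
    x ∈ dualCode C ↔ ∀ c ∈ C, ∑ i, x i * c i = 0 := Iff.rfl

lemma mem_dual_schur {n : ℕ} {C D : Submodule (ZMod 2) (Fin n → ZMod 2)} {u : Fin n → ZMod 2}
    (h : ∀ c ∈ C, ∀ d ∈ D, ∑ i, u i * (c i * d i) = 0) : u ∈ dualCode (schur C D) := by
  intro c hc
  induction hc using Submodule.span_induction with
  | mem x hx =>
      obtain ⟨c, hc, d, hd, rfl⟩ := hx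
      simpa [Pi.mul_apply] using h c hc d hd
  | zero => simp
  | add a b _ _ ha hb =>
      have : ∀ i, u i * (a + b) i = u i * a i + u i * b i := fun i => by
        simp [mul_add]
      rw [Finset.sum_congr rfl fun i _ => this i, Finset.sum_add_distrib, ha, hb, add_zero]
  | smul r a _ ha =>
      have : ∀ i, u i * (r • a) i = r * (u i * a i) := fun i => by
        simp [mul_comm, mul_left_comm]
      rw [Finset.sum_congr rfl fun i _ => this i, ← Finset.mul_sum, ha, mul_zero]

lemma core {n : ℕ} {C₁ : Submodule (ZMod 2) (Fin n → ZMod 2)}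
    (hmax : ¬ ∃ D₁ D₂ : Submodule (ZMod 2) (Fin n → ZMod 2),
        IsCSST D₁ D₂ ∧ D₂ ≠ ⊥ ∧ C₁ < D₁)
    {z w : Fin n → ZMod 2}
    (hz : z ∈ C₁ ⊓ dualCode (schur C₁ C₁)) (hw : w ∈ C₁ ⊓ dualCode (schur C₁ C₁))
    (hz0 : z ≠ 0) (hw0 : w ≠ 0) (hzw : z ≠ w) : False := by
  have h1 : ∀ a : ZMod 2, a ≠ 0 → a = 1 := by decide
  -- Step 1: if u is a nonzero element of C₁ ⊓ (C₁⋆C₁)^⊥ and x is supported off supp u,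
  -- then x ∈ C₁.
  have key : ∀ u ∈ C₁ ⊓ dualCode (schur C₁ C₁), u ≠ 0 →
      ∀ x : Fin n → ZMod 2, (∀ i, u i * x i = 0) → x ∈ C₁ := by
    intro u hu hu0 x hx
    by_contra hxC
    apply hmax
    refine ⟨C₁ ⊔ Submodule.span (ZMod 2) {x}, Submodule.span (ZMod 2) {u}, ?_, ?_, ?_⟩
    · rw [IsCSST, Submodule.span_singleton_le_iff_mem, Submodule.mem_inf]
      refine ⟨Submodule.mem_sup_left hu.1, ?_⟩
      apply mem_dual_schur
      intro c hc d hd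
      rw [Submodule.mem_sup] at hc hd
      obtain ⟨c₁, hc₁, xs, hxs, rfl⟩ := hc
      obtain ⟨d₁, hd₁, ys, hys, rfl⟩ := hd
      rw [Submodule.mem_span_singleton] at hxs hys
      obtain ⟨a, rfl⟩ := hxs
      obtain ⟨b, rfl⟩ := hys
      have heq : ∀ i, u i * ((c₁ + a • x) i * (d₁ + b • x) i) = u i * (c₁ i * d₁ i) := by
        intro i
        have : u i * ((c₁ i + a * x i) * (d₁ i + b * x i)) =
            u i * (c₁ i * d₁ i) + (u i * x i) * (b * c₁ i + a * d₁ i + a * b * x i) := by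
          ring
        simpa [hx i] using this
      rw [Finset.sum_congr rfl fun i _ => heq i]
      have hgen : c₁ * d₁ ∈ schur C₁ C₁ :=
        Submodule.subset_span ⟨c₁, hc₁, d₁, hd₁, rfl⟩
      simpa [Pi.mul_apply] using hu.2 (c₁ * d₁) hgen
    · intro hb
      exact hu0 (Submodule.span_singleton_eq_bot.mp hb)
    · refine lt_of_le_of_ne le_sup_left fun he => hxC ?_
      rw [he]
      exact Submodule.mem_sup_right (Submodule.mem_span_singleton_self x)
  -- Step 2: all standard basis vectors lie in C₁.
  have hzw0 : z + w ≠ 0 := by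
    intro h0
    apply hzw
    funext i
    have := congrFun h0 i
    simp only [Pi.add_apply, Pi.zero_apply] at this
    revert this
    revert hzw
    have : ∀ a b : ZMod 2, a + b = 0 → a = b := by decide
    intro _ h'
    exact this _ _ h'
  have hei : ∀ i : Fin n, Pi.single i (1 : ZMod 2) ∈ C₁ := by
    intro i
    by_cases hzi : z i = 0
    · refine key z hz hz0 _ fun j => ?_
      rcases eq_or_ne j i with rfl | hj
      · simp [hzi]
      · simp [Pi.single_eq_of_ne hj]
    · by_cases hwi : w i = 0
      · refine key w hw hw0 _ fun j => ?_
        rcases eq_or_ne j i with rfl | hj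
        · simp [hwi]
        · simp [Pi.single_eq_of_ne hj]
      · refine key (z + w) (add_mem hz hw) hzw0 _ fun j => ?_
        rcases eq_or_ne j i with rfl | hj
        · have : (1:ZMod 2) + 1 = 0 := by decide
          simp [Pi.add_apply, h1 _ hzi, h1 _ hwi, this]
        · simp [Pi.single_eq_of_ne hj]
  -- Step 3: then z = 0, contradiction.
  apply hz0
  funext i
  have hgen : (Pi.single i (1 : ZMod 2)) * (Pi.single i 1) ∈ schur C₁ C₁ :=
    Submodule.subset_span ⟨_, hei i, _, hei i, rfl⟩
  have := hz.2 _ hgen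
  simp only [Pi.mul_apply, Pi.single_apply] at this
  rw [Finset.sum_congr rfl (fun j _ => show z j * ((if j = i then (1:ZMod 2) else 0) *
      (if j = i then 1 else 0)) = if j = i then z j else 0 by split <;> simp)] at this
  rw [Finset.sum_ite_eq' Finset.univ i z] at this
  simpa using this

theorem stmt_17 (n : ℕ) (C₁ C₂ : Submodule (ZMod 2) (Fin n → ZMod 2))
    (h : IsCSST C₁ C₂) (h₂ : C₂ ≠ ⊥)
    (hmax : ¬ ∃ D₁ D₂ : Submodule (ZMod 2) (Fin n → ZMod 2),
        IsCSST D₁ D₂ ∧ D₂ ≠ ⊥ ∧ C₁ < D₁) :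
    (∃ y ∈ C₁, C₂ = Submodule.span (ZMod 2) {y}) ∧
      ∀ D₁ D₂ : Submodule (ZMod 2) (Fin n → ZMod 2),
        IsCSST D₁ D₂ → D₂ ≠ ⊥ → C₁ ≤ D₁ → C₂ ≤ D₂ → D₁ = C₁ ∧ D₂ = C₂ := by
  obtain ⟨z, hzC₂, hz0⟩ := Submodule.exists_mem_ne_zero_of_ne_bot h₂
  have hz1 : z ∈ C₁ ⊓ dualCode (schur C₁ C₁) := h hzC₂
  have hspan : C₂ = Submodule.span (ZMod 2) {z} := by
    apply le_antisymm
    · intro w hw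
      rcases eq_or_ne w 0 with rfl | hw0
      · exact Submodule.zero_mem _
      rcases eq_or_ne w z with rfl | hwz
      · exact Submodule.mem_span_singleton_self w
      exact absurd (core hmax hz1 (h hw) hz0 hw0 (Ne.symm hwz)) not_false
    · rw [Submodule.span_singleton_le_iff_mem]
      exact hzC₂
  refine ⟨⟨z, hz1.1, hspan⟩, ?_⟩
  intro D₁ D₂ hD hD2 hCD₁ hCD₂
  have hD1 : D₁ = C₁ := by
    by_contra hne
    exact hmax ⟨D₁, D₂, hD, hD2, lt_of_le_of_ne hCD₁ fun he => hne he.symm⟩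
  refine ⟨hD1, ?_⟩
  apply le_antisymm _ hCD₂
  intro w hw
  have hw' : w ∈ C₁ ⊓ dualCode (schur C₁ C₁) := by
    have := hD hw
    rwa [hD1] at this
  rcases eq_or_ne w 0 with rfl | hw0
  · exact Submodule.zero_mem _
  rcases eq_or_ne w z with rfl | hwz
  · exact hzC₂
  exact absurd (core hmax hz1 hw' hz0 hw0 (Ne.symm hwz)) not_false
end

section
/- Let (C₁, C₂) be a CSS-T pair of binary codes of length n. Then the all-ones vector 𝟙 lies in (C₂^{⋆3})^⊥; equivalently, for all a, b, c ∈ C₂ one has ∑_{i=1}^{n} aᵢbᵢcᵢ = 0 in 𝔽₂, i.e., the Hamming weight of a⋆b⋆c is even. -/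
open Finset

theorem stmt_18 (n : ℕ) (C₁ C₂ : Submodule (ZMod 2) (Fin n → ZMod 2))
    (h : IsCSST C₁ C₂) :
    (1 : Fin n → ZMod 2) ∈ dualCode (schur (schur C₂ C₂) C₂) := by

  intro x hx
  show ∑ i, (1 : Fin n → ZMod 2) i * x i = 0
  simp only [Pi.one_apply, one_mul]
  induction hx using Submodule.span_induction with
  | mem x hx =>
    obtain ⟨m, hm, d, hd, rfl⟩ := hx
    have key : ∀ m ∈ schur C₂ C₂, ∑ i, m i * d i = 0 := by
      intro m hm
      induction hm using Submodule.span_induction with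
      | mem m hm =>
        obtain ⟨a, ha, b, hb, rfl⟩ := hm
        have hbd : b * d ∈ schur C₁ C₁ :=
          Submodule.subset_span ⟨b, (h hb).1, d, (h hd).1, rfl⟩
        have := (h ha).2 (b * d) hbd
        calc ∑ i, (a * b) i * d i = ∑ i, a i * (b * d) i := by
              apply Finset.sum_congr rfl; intro i _
              simp [Pi.mul_apply]; ring
          _ = 0 := this
      | zero => simp
      | add p q _ _ hp hq =>
        have : ∑ i, (p + q) i * d i = ∑ i, (p i * d i + q i * d i) := by
          apply Finset.sum_congr rfl; intro i _; simp [add_mul]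
        rw [this, Finset.sum_add_distrib, hp, hq, add_zero]
      | smul r p _ hp =>
        have : ∑ i, (r • p) i * d i = r * ∑ i, p i * d i := by
          rw [Finset.mul_sum]; apply Finset.sum_congr rfl; intro i _
          simp [mul_assoc]
        rw [this, hp, mul_zero]
    calc ∑ i, (m * d) i = ∑ i, m i * d i := by
          apply Finset.sum_congr rfl; intro i _; simp
      _ = 0 := key m hm
  | zero => simp
  | add p q _ _ hp hq =>
    rw [show ∑ i, (p + q) i = ∑ i, (p i + q i) from rfl, Finset.sum_add_distrib, hp, hq, add_zero]
  | smul r p _ hp =>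
    have : ∑ i, (r • p) i = r * ∑ i, p i := by
      rw [Finset.mul_sum]; apply Finset.sum_congr rfl; intro i _; simp
    rw [this, hp, mul_zero]
end

section
/- Let s > 1, let n > 1 divide 2^s − 1, and let β ∈ 𝔽_{2^s} be a primitive n-th root of unity. Let I₁, I₂ ⊆ ℤ/nℤ be cyclotomic cosets (i.e., 2·Iⱼ = Iⱼ for j = 1, 2). Then (C(I₁), C(I₂)) is a CSS-T pair if and only if I₂ ⊆ I₁ and 0 ∉ I₁ + I₁ + I₂, where I₁ + I₁ + I₂ = {a + b + c : a, b ∈ I₁, c ∈ I₂} ⊆ ℤ/nℤ is the Minkowski sum. -/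
open Finset

/-- The `ZMod 2`-linear evaluation map `c ↦ ∑ k, c k • β^(j·k)` used to cut out a
binary cyclic code by its parity checks. -/
noncomputable def evalMap {s n : ℕ} (β : GaloisField 2 s) (j : ZMod n) :
    (Fin n → ZMod 2) →ₗ[ZMod 2] GaloisField 2 s where
  toFun c := ∑ k : Fin n,
    algebraMap (ZMod 2) (GaloisField 2 s) (c k) * β ^ (j.val * (k : ℕ))
  map_add' := by
    intro a b
    rw [← Finset.sum_add_distrib]
    apply Finset.sum_congr rfl
    intro k _
    simp [add_mul]
  map_smul' := by
    intro r a
    simp only [RingHom.id_apply]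
    rw [Finset.smul_sum]
    apply Finset.sum_congr rfl
    intro k _
    simp [Algebra.smul_def, mul_assoc]

/-- The binary cyclic code with generating set `I ⊆ ℤ/nℤ`: the codewords are the
vectors `c` with `∑ k, c k β^(jk) = 0` for every `j ∉ I`. -/
noncomputable def cyclicCode {s n : ℕ} (β : GaloisField 2 s) (I : Set (ZMod n)) :
    Submodule (ZMod 2) (Fin n → ZMod 2) :=
  ⨅ j ∈ Iᶜ, LinearMap.ker (evalMap β j)

/-!
Write `x̂(j) = ∑ₖ xₖ β^{jk}` for the discrete Fourier transform over `𝔽_{2^s}`, so that `C(I)`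
is the set of binary words whose spectrum vanishes off `I`. Since `n` is odd, Fourier inversion
holds over `𝔽_{2^s}` and gives `∑ₖ xₖ yₖ zₖ = ∑_{p,q} x̂(p) ŷ(q) ẑ(-(p+q))`; if `I₂ ⊆ I₁` and no
`a, b ∈ I₁`, `c ∈ I₂` satisfy `a + b + c = 0`, every term of this sum vanishes.

Conversely, for `a ∈ I` the trace word `xₖ = Tr(t β^{-ka})` lies in `C(I)`: its spectrum is
`t^{2^i}` at the points `2^i a` of the cyclotomic orbit of `a` and zero elsewhere. Testing the
CSS-T conditions on such words yields identities `∑ᵢ cᵢ t^{2^i} = 0` (in one variable, or in three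
variables `t, u, v`) holding on all of `𝔽_{2^s}`. The Frobenius powers `t ↦ t^{2^i}`, `i < s`, are
distinct field automorphisms, hence linearly independent (Dedekind), so every coefficient
vanishes. The coefficient at `i = 0` is `1` when `b ∈ I₂ \ I₁`, and likewise when `a + b + c = 0`,
which is a contradiction in either case.
-/

open AddChar

theorem Finset.sum_mul_sum_mul_sum {ι κ μ R : Type*} [NonUnitalNonAssocSemiring R]
    (s : Finset ι) (t : Finset κ) (u : Finset μ) (f : ι → R) (g : κ → R) (h : μ → R) :
    (∑ i ∈ s, f i) * (∑ j ∈ t, g j) * (∑ l ∈ u, h l) =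
      ∑ i ∈ s, ∑ j ∈ t, ∑ l ∈ u, f i * g j * h l := by
  rw [Finset.sum_mul_sum]
  simp_rw [Finset.sum_mul, Finset.mul_sum]

theorem FiniteField.linearIndependent_pow_card_pow (K L : Type*) [Field K] [Fintype K] [Field L]
    [Finite L] [Algebra K L] :
    LinearIndependent L
      (fun (i : Fin (Module.finrank K L)) (x : L) => x ^ (Fintype.card K ^ (i : ℕ))) := by
  let frob (i : Fin (Module.finrank K L)) : L →* L :=
    (FiniteField.frobeniusAlgEquivOfAlgebraic K L ^ (i : ℕ)).toAlgHom.toMonoidHom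
  have hfrob : Function.Injective frob := fun i j hij =>
    (FiniteField.bijective_frobeniusAlgEquivOfAlgebraic_pow K L).injective
      (AlgEquiv.ext fun x => DFunLike.congr_fun hij x)
  have hfun : (fun f : L →* L => (f : L → L)) ∘ frob =
      fun (i : Fin (Module.finrank K L)) (x : L) => x ^ (Fintype.card K ^ (i : ℕ)) := by
    funext i x
    simp [frob, AlgEquiv.coe_pow, FiniteField.coe_frobeniusAlgEquivOfAlgebraic_iterate]
  exact hfun ▸ (linearIndependent_monoidHom L L).comp frob hfrob

theorem ZMod.natCast_fin_bijective (n : ℕ) [NeZero n] :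
    Function.Bijective (fun k : Fin n => ((k : ℕ) : ZMod n)) := by
  rw [Fintype.bijective_iff_injective_and_card, ZMod.card, Fintype.card_fin]
  refine ⟨fun k m hkm => Fin.ext ?_, rfl⟩
  simpa [ZMod.val_natCast, Nat.mod_eq_of_lt] using congrArg ZMod.val hkm

namespace GaloisField

variable {s : ℕ}

theorem eq_zero_of_forall_sum_mul_pow_eq_zero (hs : s ≠ 0) {c : Fin s → GaloisField 2 s}
    (h : ∀ t, ∑ i, c i * t ^ 2 ^ (i : ℕ) = 0) : c = 0 := by
  have li := FiniteField.linearIndependent_pow_card_pow (ZMod 2) (GaloisField 2 s)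
  rw [GaloisField.finrank 2 hs, ZMod.card] at li
  exact funext (Fintype.linearIndependent_iff.mp li c (funext fun t => by simpa using h t))

theorem eq_zero_of_forall_sum_mul_pow_eq_zero₃ (hs : s ≠ 0)
    {c : Fin s → Fin s → Fin s → GaloisField 2 s}
    (h : ∀ t u v, ∑ i, ∑ j, ∑ l,
      c i j l * (t ^ 2 ^ (i : ℕ) * u ^ 2 ^ (j : ℕ) * v ^ 2 ^ (l : ℕ)) = 0) : c = 0 := by
  have h₁ : ∀ u v i, ∑ j, ∑ l, c i j l * (u ^ 2 ^ (j : ℕ) * v ^ 2 ^ (l : ℕ)) = 0 := fun u v =>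
    congrFun <| eq_zero_of_forall_sum_mul_pow_eq_zero hs fun t => by
      rw [← h t u v]
      simp only [Finset.sum_mul]
      exact sum_congr rfl fun i _ => sum_congr rfl fun j _ => sum_congr rfl fun l _ => by ring
  have h₂ : ∀ v i j, ∑ l, c i j l * v ^ 2 ^ (l : ℕ) = 0 := fun v i =>
    congrFun <| eq_zero_of_forall_sum_mul_pow_eq_zero hs fun u => by
      rw [← h₁ u v i]
      simp only [Finset.sum_mul]
      exact sum_congr rfl fun j _ => sum_congr rfl fun l _ => by ring
  funext i j l
  exact congrFun (eq_zero_of_forall_sum_mul_pow_eq_zero hs fun v => h₂ v i j) l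

theorem algebraMap_trace_eq_sum_pow (hs : s ≠ 0) (x : GaloisField 2 s) :
    algebraMap (ZMod 2) (GaloisField 2 s) (Algebra.trace (ZMod 2) (GaloisField 2 s) x) =
      ∑ i : Fin s, x ^ 2 ^ (i : ℕ) := by
  rw [FiniteField.algebraMap_trace_eq_sum_pow, GaloisField.finrank 2 hs, Nat.card_zmod,
    Finset.sum_range]

end GaloisField

section Codes

variable {s n : ℕ} {β : GaloisField 2 s}

lemma mem_cyclicCode {I : Set (ZMod n)} {x : Fin n → ZMod 2} :
    x ∈ cyclicCode β I ↔ ∀ j ∉ I, evalMap β j x = 0 := by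
  simp [cyclicCode]

lemma cyclicCode_mono {I J : Set (ZMod n)} (h : I ⊆ J) : cyclicCode β I ≤ cyclicCode β J :=
  fun _ hx => mem_cyclicCode.mpr fun j hj => mem_cyclicCode.mp hx j fun hjI => hj (h hjI)

lemma pow_two_mul_mem {I : Set (ZMod n)} (hI : (fun a => 2 * a) '' I = I) {a : ZMod n}
    (ha : a ∈ I) (i : ℕ) : 2 ^ i * a ∈ I := by
  induction i with
  | zero => simpa using ha
  | succ i ih =>
    rw [pow_succ', mul_assoc, ← hI]
    exact Set.mem_image_of_mem _ ih

lemma mem_dualCode_span {S : Set (Fin n → ZMod 2)} {z : Fin n → ZMod 2} :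
    z ∈ dualCode (Submodule.span (ZMod 2) S) ↔ ∀ w ∈ S, ∑ i, z i * w i = 0 := by
  refine ⟨fun hz w hw => hz w (Submodule.subset_span hw), fun hz w hw => ?_⟩
  induction hw using Submodule.span_induction with
  | mem w hw => exact hz w hw
  | zero => simp
  | add w w' _ _ hw hw' => simp [mul_add, sum_add_distrib, hw, hw']
  | smul r w _ hw => simp [mul_left_comm, ← mul_sum, hw]

lemma isCSST_iff {C₁ C₂ : Submodule (ZMod 2) (Fin n → ZMod 2)} :
    IsCSST C₁ C₂ ↔ C₂ ≤ C₁ ∧ ∀ x ∈ C₁, ∀ y ∈ C₁, ∀ z ∈ C₂, ∑ k, x k * y k * z k = 0 := by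
  rw [IsCSST, schur, le_inf_iff]
  refine and_congr Iff.rfl ⟨fun h x hx y hy z hz => ?_, fun h z hz => ?_⟩
  · rw [← mem_dualCode_span.mp (h hz) _ ⟨x, hx, y, hy, rfl⟩]
    exact sum_congr rfl fun k _ => by simp only [Pi.mul_apply]; ring
  · refine mem_dualCode_span.mpr ?_
    rintro _ ⟨x, hx, y, hy, rfl⟩
    rw [← h x hx y hy z hz]
    exact sum_congr rfl fun k _ => by simp only [Pi.mul_apply]; ring

end Codes

section Fourier

variable {s n : ℕ} [NeZero n] {β : GaloisField 2 s}

lemma sum_zmodChar_mul (hβ : IsPrimitiveRoot β n) (hn : Odd n) (d : ZMod n) :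
    ∑ p : ZMod n, zmodChar n hβ.pow_eq_one (p * d) = if d = 0 then 1 else 0 := by
  rw [sum_mulShift d (zmodChar_primitive_of_primitive_root n hβ), ZMod.card]
  have hn1 : (n : GaloisField 2 s) = 1 := by
    rw [CharTwo.natCast_eq_ite, if_neg (Nat.not_even_iff_odd.mpr hn)]
  push_cast [hn1]
  rfl

lemma sum_fin_zmodChar_mul (hβ : IsPrimitiveRoot β n) (hn : Odd n) (d : ZMod n) :
    ∑ k : Fin n, zmodChar n hβ.pow_eq_one ((k : ℕ) * d) = if d = 0 then 1 else 0 :=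
  (Fintype.sum_bijective _ (ZMod.natCast_fin_bijective n) _ _ fun _ => rfl).trans
    (sum_zmodChar_mul hβ hn d)

lemma evalMap_eq_sum_zmodChar (hβ : β ^ n = 1) (j : ZMod n) (x : Fin n → ZMod 2) :
    evalMap β j x =
      ∑ k : Fin n, algebraMap (ZMod 2) (GaloisField 2 s) (x k) * zmodChar n hβ ((k : ℕ) * j) := by
  simp only [evalMap, LinearMap.coe_mk, AddHom.coe_mk]
  refine Finset.sum_congr rfl fun k _ => ?_
  rw [mul_comm j.val, ← zmodChar_apply' hβ, Nat.cast_mul, ZMod.natCast_zmod_val]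

lemma sum_evalMap_mul_zmodChar (hβ : IsPrimitiveRoot β n) (hn : Odd n) (x : Fin n → ZMod 2)
    (m : Fin n) :
    ∑ p : ZMod n, evalMap β p x * zmodChar n hβ.pow_eq_one (-((m : ℕ) * p)) =
      algebraMap (ZMod 2) (GaloisField 2 s) (x m) := by
  simp_rw [evalMap_eq_sum_zmodChar hβ.pow_eq_one, Finset.sum_mul]
  rw [Finset.sum_comm]
  have hterm : ∀ k : Fin n, ∑ p : ZMod n, algebraMap (ZMod 2) (GaloisField 2 s) (x k) *
      zmodChar n hβ.pow_eq_one ((k : ℕ) * p) * zmodChar n hβ.pow_eq_one (-((m : ℕ) * p)) =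
      if k = m then algebraMap (ZMod 2) (GaloisField 2 s) (x k) else 0 := by
    intro k
    simp_rw [mul_assoc, ← map_add_eq_mul, ← mul_sum]
    simp_rw [show ∀ p : ZMod n, ((k : ℕ) : ZMod n) * p + -((m : ℕ) * p) = p * ((k : ℕ) - (m : ℕ))
      from fun p => by ring]
    simp [sum_zmodChar_mul hβ hn, sub_eq_zero, (ZMod.natCast_fin_bijective n).injective.eq_iff]
  rw [Finset.sum_congr rfl fun k _ => hterm k, Finset.sum_ite_eq' univ m]
  simp

lemma algebraMap_sum_mul_mul (hβ : IsPrimitiveRoot β n) (hn : Odd n) (x y z : Fin n → ZMod 2) :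
    algebraMap (ZMod 2) (GaloisField 2 s) (∑ k, x k * y k * z k) =
      ∑ p, ∑ q, evalMap β p x * evalMap β q y * evalMap β (-(p + q)) z := by
  simp_rw [map_sum, map_mul, ← sum_evalMap_mul_zmodChar hβ hn x,
    ← sum_evalMap_mul_zmodChar hβ hn y, evalMap_eq_sum_zmodChar hβ.pow_eq_one (-(_ + _)) z,
    Finset.sum_mul_sum, Finset.sum_mul, Finset.mul_sum]
  rw [Finset.sum_comm (γ := Fin n)]
  refine Finset.sum_congr rfl fun p _ => ?_
  rw [Finset.sum_comm (γ := Fin n)]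
  refine Finset.sum_congr rfl fun q _ => Finset.sum_congr rfl fun k _ => ?_
  rw [show ((k : ℕ) : ZMod n) * -(p + q) = -((k : ℕ) * p) + -((k : ℕ) * q) by ring,
    map_add_eq_mul]
  ring

lemma sum_mul_mul_eq_zero (hβ : IsPrimitiveRoot β n) (hn : Odd n) {I₁ I₂ : Set (ZMod n)}
    (h : ¬ ∃ a ∈ I₁, ∃ b ∈ I₁, ∃ c ∈ I₂, a + b + c = 0) {x y z : Fin n → ZMod 2}
    (hx : x ∈ cyclicCode β I₁) (hy : y ∈ cyclicCode β I₁) (hz : z ∈ cyclicCode β I₂) :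
    ∑ k, x k * y k * z k = 0 := by
  apply (algebraMap (ZMod 2) (GaloisField 2 s)).injective
  rw [algebraMap_sum_mul_mul hβ hn, map_zero]
  refine sum_eq_zero fun p _ => sum_eq_zero fun q _ => ?_
  by_cases hp : p ∈ I₁
  · by_cases hq : q ∈ I₁
    · have hr : -(p + q) ∉ I₂ := fun hr => h ⟨p, hp, q, hq, _, hr, add_neg_cancel _⟩
      rw [mem_cyclicCode.mp hz _ hr, mul_zero]
    · rw [mem_cyclicCode.mp hy _ hq, mul_zero, zero_mul]
  · rw [mem_cyclicCode.mp hx _ hp, zero_mul, zero_mul]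

noncomputable def traceWord (β : GaloisField 2 s) (a : ZMod n) (t : GaloisField 2 s) :
    Fin n → ZMod 2 :=
  fun k => Algebra.trace (ZMod 2) (GaloisField 2 s) (t * β ^ (-((k : ℕ) * a) : ZMod n).val)

lemma algebraMap_traceWord (hs : s ≠ 0) (hβ : β ^ n = 1) (a : ZMod n) (t : GaloisField 2 s)
    (k : Fin n) :
    algebraMap (ZMod 2) (GaloisField 2 s) (traceWord β a t k) =
      ∑ i : Fin s, t ^ 2 ^ (i : ℕ) * zmodChar n hβ (-((k : ℕ) * (2 ^ (i : ℕ) * a))) := by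
  rw [traceWord, GaloisField.algebraMap_trace_eq_sum_pow hs]
  refine Finset.sum_congr rfl fun i _ => ?_
  rw [mul_pow, ← zmodChar_apply hβ, ← map_nsmul_eq_pow, nsmul_eq_mul]
  congr 2
  push_cast
  ring

lemma evalMap_traceWord (hs : s ≠ 0) (hβ : IsPrimitiveRoot β n) (hn : Odd n) (a : ZMod n)
    (t : GaloisField 2 s) (j : ZMod n) :
    evalMap β j (traceWord β a t) =
      ∑ i : Fin s, (if 2 ^ (i : ℕ) * a = j then 1 else 0) * t ^ 2 ^ (i : ℕ) := by
  simp_rw [evalMap_eq_sum_zmodChar hβ.pow_eq_one, algebraMap_traceWord hs hβ.pow_eq_one,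
    Finset.sum_mul]
  rw [Finset.sum_comm]
  refine Finset.sum_congr rfl fun i _ => ?_
  simp_rw [mul_assoc, ← map_add_eq_mul, ← mul_sum]
  simp_rw [show ∀ k : Fin n, -((k : ℕ) * (2 ^ (i : ℕ) * a)) + (k : ℕ) * j =
    (k : ℕ) * (j - 2 ^ (i : ℕ) * a) from fun k => by ring]
  rw [sum_fin_zmodChar_mul hβ hn, mul_comm]
  exact congrArg (· * _) (if_congr (sub_eq_zero.trans eq_comm) rfl rfl)

lemma traceWord_mem_cyclicCode (hs : s ≠ 0) (hβ : IsPrimitiveRoot β n) (hn : Odd n)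
    {I : Set (ZMod n)} (hI : (fun a => 2 * a) '' I = I) {a : ZMod n} (ha : a ∈ I)
    (t : GaloisField 2 s) : traceWord β a t ∈ cyclicCode β I := by
  refine mem_cyclicCode.mpr fun j hj => ?_
  rw [evalMap_traceWord hs hβ hn]
  refine Finset.sum_eq_zero fun i _ => ?_
  have hne : 2 ^ (i : ℕ) * a ≠ j := fun h => hj (h ▸ pow_two_mul_mem hI ha i)
  rw [if_neg hne, zero_mul]

lemma algebraMap_sum_traceWord_mul (hs : s ≠ 0) (hβ : IsPrimitiveRoot β n) (hn : Odd n)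
    (a b c : ZMod n) (t u v : GaloisField 2 s) :
    algebraMap (ZMod 2) (GaloisField 2 s)
        (∑ k, traceWord β a t k * traceWord β b u k * traceWord β c v k) =
      ∑ i : Fin s, ∑ j : Fin s, ∑ l : Fin s,
        (if 2 ^ (i : ℕ) * a + 2 ^ (j : ℕ) * b + 2 ^ (l : ℕ) * c = 0 then 1 else 0) *
          (t ^ 2 ^ (i : ℕ) * u ^ 2 ^ (j : ℕ) * v ^ 2 ^ (l : ℕ)) := by
  simp_rw [map_sum, map_mul, algebraMap_traceWord hs hβ.pow_eq_one,
    Finset.sum_mul_sum_mul_sum]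
  rw [Finset.sum_comm (γ := Fin n)]
  refine Finset.sum_congr rfl fun i _ => ?_
  rw [Finset.sum_comm (γ := Fin n)]
  refine Finset.sum_congr rfl fun j _ => ?_
  rw [Finset.sum_comm (γ := Fin n)]
  refine Finset.sum_congr rfl fun l _ => ?_
  have hterm : ∀ k : Fin n,
      t ^ 2 ^ (i : ℕ) * zmodChar n hβ.pow_eq_one (-((k : ℕ) * (2 ^ (i : ℕ) * a))) *
        (u ^ 2 ^ (j : ℕ) * zmodChar n hβ.pow_eq_one (-((k : ℕ) * (2 ^ (j : ℕ) * b)))) *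
        (v ^ 2 ^ (l : ℕ) * zmodChar n hβ.pow_eq_one (-((k : ℕ) * (2 ^ (l : ℕ) * c)))) =
      t ^ 2 ^ (i : ℕ) * u ^ 2 ^ (j : ℕ) * v ^ 2 ^ (l : ℕ) *
        zmodChar n hβ.pow_eq_one
          ((k : ℕ) * -(2 ^ (i : ℕ) * a + 2 ^ (j : ℕ) * b + 2 ^ (l : ℕ) * c)) := by
    intro k
    rw [show ((k : ℕ) : ZMod n) * -(2 ^ (i : ℕ) * a + 2 ^ (j : ℕ) * b + 2 ^ (l : ℕ) * c) =
      -((k : ℕ) * (2 ^ (i : ℕ) * a)) + -((k : ℕ) * (2 ^ (j : ℕ) * b)) +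
        -((k : ℕ) * (2 ^ (l : ℕ) * c)) by ring, map_add_eq_mul, map_add_eq_mul]
    ring
  rw [Finset.sum_congr rfl fun k _ => hterm k, ← mul_sum, sum_fin_zmodChar_mul hβ hn, mul_comm]
  simp only [neg_eq_zero]

lemma subset_of_cyclicCode_le (hs : s ≠ 0) (hβ : IsPrimitiveRoot β n) (hn : Odd n)
    {I₁ I₂ : Set (ZMod n)} (hI₂ : (fun a => 2 * a) '' I₂ = I₂)
    (hle : cyclicCode β I₂ ≤ cyclicCode β I₁) : I₂ ⊆ I₁ := by
  intro b hb
  by_contra hb₁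
  have hcoeff := GaloisField.eq_zero_of_forall_sum_mul_pow_eq_zero hs
    (c := fun i => if 2 ^ (i : ℕ) * b = b then 1 else 0) fun t => by
      rw [← evalMap_traceWord hs hβ hn]
      exact mem_cyclicCode.mp (hle (traceWord_mem_cyclicCode hs hβ hn hI₂ hb t)) b hb₁
  simpa using congrFun hcoeff ⟨0, Nat.pos_of_ne_zero hs⟩

lemma exists_sum_mul_mul_ne_zero (hs : s ≠ 0) (hβ : IsPrimitiveRoot β n) (hn : Odd n)
    {I₁ I₂ : Set (ZMod n)} (hI₁ : (fun a => 2 * a) '' I₁ = I₁)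
    (hI₂ : (fun a => 2 * a) '' I₂ = I₂) {a b c : ZMod n} (ha : a ∈ I₁) (hb : b ∈ I₁)
    (hc : c ∈ I₂) (habc : a + b + c = 0) :
    ∃ x ∈ cyclicCode β I₁, ∃ y ∈ cyclicCode β I₁, ∃ z ∈ cyclicCode β I₂,
      ∑ k, x k * y k * z k ≠ 0 := by
  by_contra! h
  have hcoeff := GaloisField.eq_zero_of_forall_sum_mul_pow_eq_zero₃ hs
    (c := fun i j l => if 2 ^ (i : ℕ) * a + 2 ^ (j : ℕ) * b + 2 ^ (l : ℕ) * c = 0 then 1 else 0)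
    fun t u v => by
      rw [← algebraMap_sum_traceWord_mul hs hβ hn, h _ (traceWord_mem_cyclicCode hs hβ hn hI₁ ha t)
        _ (traceWord_mem_cyclicCode hs hβ hn hI₁ hb u) _
        (traceWord_mem_cyclicCode hs hβ hn hI₂ hc v), map_zero]
  have h₀ : 0 < s := Nat.pos_of_ne_zero hs
  simpa [habc] using congr_fun₃ hcoeff ⟨0, h₀⟩ ⟨0, h₀⟩ ⟨0, h₀⟩

end Fourier

theorem stmt_19 (s n : ℕ) (hs : 1 < s) (hn : 1 < n) (hdvd : n ∣ 2 ^ s - 1)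
    (β : GaloisField 2 s) (hβ : IsPrimitiveRoot β n)
    (I₁ I₂ : Set (ZMod n))
    (hI₁ : (fun a => 2 * a) '' I₁ = I₁) (hI₂ : (fun a => 2 * a) '' I₂ = I₂) :
    IsCSST (cyclicCode β I₁) (cyclicCode β I₂)
    ↔ (I₂ ⊆ I₁ ∧ ¬ ∃ a ∈ I₁, ∃ b ∈ I₁, ∃ c ∈ I₂, a + b + c = (0 : ZMod n)) := by
  have : NeZero n := ⟨by omega⟩
  have hs₀ : s ≠ 0 := by omega
  have hn_odd : Odd n :=
    (Nat.Even.sub_odd Nat.one_le_two_pow (Nat.even_pow.mpr ⟨even_two, hs₀⟩) odd_one).of_dvd_nat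
      hdvd
  rw [isCSST_iff]
  constructor
  · rintro ⟨hle, horth⟩
    refine ⟨subset_of_cyclicCode_le hs₀ hβ hn_odd hI₂ hle, ?_⟩
    rintro ⟨a, ha, b, hb, c, hc, habc⟩
    obtain ⟨x, hx, y, hy, z, hz, hxyz⟩ :=
      exists_sum_mul_mul_ne_zero hs₀ hβ hn_odd hI₁ hI₂ ha hb hc habc
    exact hxyz (horth x hx y hy z hz)
  · rintro ⟨hsub, hnt⟩
    exact ⟨cyclicCode_mono hsub, fun x hx y hy z hz => sum_mul_mul_eq_zero hβ hn_odd hnt hx hy hz⟩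
end
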